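/- arXiv:2604.03324 — 3 statements merged into one kernel-verified Lean document; each statement's English description precedes it below -/
import Mathlib

section
/- Let E be an effect algebra with an (S1)–(S4) operation ∘, and let p be an atom of E with finite isotropic index at least 2. Then p ∘ p = 0. -/
/-- An effect algebra `(E, 0, 1, ⊕)`, with the partial operation `⊕` encoded by a
definedness predicate `perp` together with a total function `add` whose value is only
meaningful on `perp` pairs. -/
structure EffectAlgebra (α : Type*) where
  /-- `perp a b` means `a ⊕ b` is defined. -/
  perp : α → α → Prop
  /-- the orthogonal sum (meaningful when `perp a b`). -/
  add : α → α → α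
  zero : α
  one : α
  /-- commutativity -/
  perp_comm : ∀ a b, perp a b → perp b a
  add_comm : ∀ a b, perp a b → add a b = add b a
  /-- associativity -/
  perp_left : ∀ a b c, perp b c → perp a (add b c) → perp a b
  perp_assoc : ∀ a b c, perp b c → perp a (add b c) → perp (add a b) c
  add_assoc : ∀ a b c, perp b c → perp a (add b c) →
    add (add a b) c = add a (add b c)
  /-- unique orthosupplement -/
  orthosupp : ∀ a, ∃! b, perp a b ∧ add a b = one
  /-- zero-one law -/
  zero_one : ∀ a, perp a one → a = zero
  /-- `zero` is the orthosupplement of `one` -/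
  perp_zero_one : perp zero one
  add_zero_one : add zero one = one

namespace EffectAlgebra

variable {α : Type*} (E : EffectAlgebra α)

/-- A map `L` is additive: if `b ⊥ c` then `L b ⊥ L c` and `L (b ⊕ c) = L b ⊕ L c`. -/
def Additive (L : α → α) : Prop :=
  ∀ b c, E.perp b c → E.perp (L b) (L c) ∧ L (E.add b c) = E.add (L b) (L c)

/-- (S1): every left translation is additive. -/
def S1 (op : α → α → α) : Prop := ∀ a, E.Additive (op a)

/-- (S2): `1 ∘ a = a`. -/
def S2 (op : α → α → α) : Prop := ∀ a, op E.one a = a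

/-- (S3): `a ∘ b = 0` implies `b ∘ a = 0`. -/
def S3 (op : α → α → α) : Prop := ∀ a b, op a b = E.zero → op b a = E.zero

/-- `b'` is the orthosupplement of `b`. -/
def IsOrthosupp (b b' : α) : Prop := E.perp b b' ∧ E.add b b' = E.one

/-- (S4): if `a ∘ b = b ∘ a` then `a ∘ b' = b' ∘ a` and `a ∘ (b ∘ c) = (a ∘ b) ∘ c`. -/
def S4 (op : α → α → α) : Prop :=
  ∀ a b, op a b = op b a →
    (∀ b', E.IsOrthosupp b b' → op a b' = op b' a) ∧
    (∀ c, op a (op b c) = op (op a b) c)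

/-- the induced order: `a ≤ b` iff `a ⊕ c = b` for some `c`. -/
def le (a b : α) : Prop := ∃ c, E.perp a c ∧ E.add a c = b

/-- an atom: a minimal nonzero element. -/
def IsAtom' (p : α) : Prop :=
  p ≠ E.zero ∧ ∀ x, E.le x p → x = E.zero ∨ x = p

end EffectAlgebra

/-- `NSum E a n s` : `s` is the `n`-fold orthogonal sum `a ⊕ ⋯ ⊕ a`. -/
inductive NSum {α : Type*} (E : EffectAlgebra α) (a : α) : ℕ → α → Prop
  | zero : NSum E a 0 E.zero
  | succ : ∀ {n s}, NSum E a n s → E.perp s a → NSum E a (n + 1) (E.add s a)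

namespace EffectAlgebra

variable {α : Type*} (E : EffectAlgebra α)

lemma perp_zero' (a : α) : E.perp E.zero a := by
  obtain ⟨b, ⟨hpb, hab⟩, _⟩ := E.orthosupp a
  exact E.perp_left _ _ _ hpb (by rw [hab]; exact E.perp_zero_one)

lemma zero_add' (a : α) : E.add E.zero a = a := by
  obtain ⟨b, ⟨hpb, hab⟩, _⟩ := E.orthosupp a
  obtain ⟨c, _, huniq'⟩ := E.orthosupp b
  have hz : E.perp E.zero (E.add a b) := by rw [hab]; exact E.perp_zero_one
  have h1 : E.perp (E.add E.zero a) b := E.perp_assoc _ _ _ hpb hz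
  have h2 : E.add (E.add E.zero a) b = E.one := by
    rw [E.add_assoc _ _ _ hpb hz, hab, E.add_zero_one]
  have e1 : E.add E.zero a = c :=
    huniq' (E.add E.zero a) ⟨E.perp_comm _ _ h1, by
      rw [E.add_comm b _ (E.perp_comm _ _ h1)]; exact h2⟩
  have e2 : a = c := huniq' a ⟨E.perp_comm _ _ hpb, by
    rw [E.add_comm b a (E.perp_comm _ _ hpb)]; exact hab⟩
  rw [e1, e2]

lemma add_zero' (a : α) : E.add a E.zero = a := by
  rw [← E.add_comm _ _ (E.perp_zero' a), E.zero_add']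

lemma cancel' (a b c : α) (hab : E.perp a b) (hac : E.perp a c)
    (h : E.add a b = E.add a c) : b = c := by
  obtain ⟨d, ⟨hd, hd1⟩, _⟩ := E.orthosupp (E.add a b)
  have hd' : E.perp d (E.add a b) := E.perp_comm _ _ hd
  have hdc' : E.perp d (E.add a c) := by rw [← h]; exact hd'
  have hdab : E.perp (E.add d a) b := E.perp_assoc d a b hab hd'
  have hdac : E.perp (E.add d a) c := E.perp_assoc d a c hac hdc'
  have hadd : E.add (E.add d a) b = E.one := by
    rw [E.add_assoc d a b hab hd', E.add_comm d _ hd', hd1]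
  have haddc : E.add (E.add d a) c = E.one := by
    rw [E.add_assoc d a c hac hdc', E.add_comm d _ hdc', ← h, hd1]
  obtain ⟨e, _, hu⟩ := E.orthosupp (E.add d a)
  rw [hu b ⟨hdab, hadd⟩, hu c ⟨hdac, haddc⟩]

lemma eq_zero_of_add_eq_zero' (a b : α) (hab : E.perp a b)
    (h : E.add a b = E.zero) : a = E.zero := by
  have h1 : E.perp (E.add a b) E.one := by rw [h]; exact E.perp_zero_one
  have h3 : E.perp E.one a := E.perp_left _ _ _ hab (E.perp_comm _ _ h1)
  exact E.zero_one a (E.perp_comm _ _ h3)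

/-- if `a ⊥ b` then `b ≤ a'` for any orthosupplement `a'` of `a`. -/
lemma le_orthosupp' (a b a' : α) (hab : E.perp a b) (ha' : E.IsOrthosupp a a') :
    E.le b a' := by
  obtain ⟨d, ⟨hd, hd1⟩, _⟩ := E.orthosupp (E.add a b)
  have hd' : E.perp d (E.add a b) := E.perp_comm _ _ hd
  have hd'' : E.perp d (E.add b a) := by rw [← E.add_comm a b hab]; exact hd'
  have hdb : E.perp d b := E.perp_left d b a (E.perp_comm _ _ hab) hd''
  have hbd : E.perp b d := E.perp_comm _ _ hdb
  have hdba : E.perp (E.add d b) a := E.perp_assoc d b a (E.perp_comm _ _ hab) hd''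
  have habd : E.perp a (E.add b d) := by
    rw [← E.add_comm d b hdb]; exact E.perp_comm _ _ hdba
  have hsum : E.add a (E.add b d) = E.one := by
    rw [← E.add_assoc a b d hbd habd, hd1]
  obtain ⟨e, _, hu⟩ := E.orthosupp a
  have e1 : E.add b d = e := hu _ ⟨habd, hsum⟩
  have e2 : a' = e := hu _ ha'
  exact ⟨d, hbd, by rw [e1, e2]⟩

end EffectAlgebra

/-- an atom summing to `n ≥ 2` copies is orthogonal to itself. -/
lemma perp_self_of_nsum {α : Type*} (E : EffectAlgebra α) (p : α) {m : ℕ} {s : α}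
    (h : NSum E p (m + 2) s) : E.perp p p := by
  cases h with
  | @succ _ s2 h1 hp1 =>
    cases h1 with
    | @succ _ s3 h2 hp2 =>
      have h4 : E.perp p (E.add s3 p) := E.perp_comm _ _ hp1
      have h4' : E.perp p (E.add p s3) := by rw [← E.add_comm s3 p hp2]; exact h4
      exact E.perp_left p p s3 (E.perp_comm _ _ hp2) h4'

/-- under an (S1)-(S4) operation, an atom `p` of finite isotropic index
at least 2 satisfies `p ∘ p = 0`. -/
theorem atom_square_zero {α : Type*} (E : EffectAlgebra α) (op : α → α → α)
    (h1 : E.S1 op) (h2 : E.S2 op) (h3 : E.S3 op) (h4 : E.S4 op)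
    (p : α) (hp : E.IsAtom' p) (n : ℕ) (hn : 2 ≤ n)
    (hex : ∃ s, NSum E p n s) (hmax : ¬ ∃ s, NSum E p (n + 1) s) :
    op p p = E.zero := by
  -- basic op facts
  have op_zero : ∀ a, op a E.zero = E.zero := by
    intro a
    have hz := h1 a E.zero E.zero (E.perp_zero' E.zero)
    have heq : op a E.zero = E.add (op a E.zero) (op a E.zero) := by
      conv_lhs => rw [← E.zero_add' E.zero, hz.2]
    have heq' : E.add (op a E.zero) E.zero = E.add (op a E.zero) (op a E.zero) := by
      rw [E.add_zero']; exact heq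
    exact (E.cancel' (op a E.zero) E.zero (op a E.zero)
      (E.perp_comm _ _ (E.perp_zero' _)) hz.1 heq').symm
  have op_one : ∀ a, op a E.one = a := by
    intro a
    have hz : op a E.zero = op E.zero a := by rw [op_zero a, h3 a E.zero (op_zero a)]
    have := (h4 a E.zero hz).1 E.one ⟨E.perp_zero_one, E.add_zero_one⟩
    rw [this, h2 a]
  obtain ⟨q, ⟨hpq, hq1⟩, _⟩ := E.orthosupp p
  have hsplit := h1 p p q hpq
  have hple : E.le (op p p) p :=
    ⟨op p q, hsplit.1, by rw [← hsplit.2, hq1, op_one]⟩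
  rcases hp.2 (op p p) hple with h0 | hpp
  · exact h0
  · exfalso
    -- from op p p = p, first show op p q = 0
    have hpq0 : op p q = E.zero := by
      apply E.cancel' p (op p q) E.zero
      · have h := hsplit.1; rw [hpp] at h; exact h
      · exact E.perp_comm _ _ (E.perp_zero' p)
      · rw [E.add_zero']
        have := hsplit.2
        rw [hq1, op_one, hpp] at this
        exact this.symm
    -- p ⊥ p from the isotropic index ≥ 2
    obtain ⟨s, hs⟩ := hex
    obtain ⟨m, rfl⟩ : ∃ m, n = m + 2 := ⟨n - 2, by omega⟩
    have hppself : E.perp p p := perp_self_of_nsum E p hs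
    -- hence p ≤ q
    obtain ⟨c, hpc, hcq⟩ := E.le_orthosupp' p p q hppself ⟨hpq, hq1⟩
    have hsplit2 := h1 p p c hpc
    have : E.add p (op p c) = E.zero := by
      rw [← hpq0, ← hcq, hsplit2.2, hpp]
    have hp0 : p = E.zero := E.eq_zero_of_add_eq_zero' p (op p c)
      (by have h := hsplit2.1; rw [hpp] at h; exact h) this
    exact hp.1 hp0
end

section
/- Let n ≥ 1. The number of binary operations on the finite chain C_n = {0,…,n} satisfying (S1) and (S2) is exactly 2^n. -/
/-- The finite chain effect algebra `C_n = {0, 1, …, n}` with `i ⊕ j = i + j`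
when `i + j ≤ n`. -/
def Chain (n : ℕ) : Type := {k : ℕ // k ≤ n}

/-- A self-map of `C_n` is additive if `L (i + j) = L i + L j` whenever `i + j ≤ n`. -/
def ChainAdditive {n : ℕ} (L : Chain n → Chain n) : Prop :=
  ∀ i j k : Chain n, i.val + j.val = k.val → (L k).val = (L i).val + (L j).val

/-- the top element `n` of `C_n`. -/
def ChainTop (n : ℕ) : Chain n := ⟨n, le_refl n⟩

/-- (S1) on `C_n`: every left translation is additive. -/
def ChainS1 {n : ℕ} (op : Chain n → Chain n → Chain n) : Prop :=
  ∀ a : Chain n, ChainAdditive (op a)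

/-- (S2) on `C_n`: `n ∘ b = b`. -/
def ChainS2 {n : ℕ} (op : Chain n → Chain n → Chain n) : Prop :=
  ∀ b : Chain n, op (ChainTop n) b = b

/-- (S3) on `C_n`: `a ∘ b = 0` implies `b ∘ a = 0`. -/
def ChainS3 {n : ℕ} (op : Chain n → Chain n → Chain n) : Prop :=
  ∀ a b : Chain n, (op a b).val = 0 → (op b a).val = 0

/-! An additive self-map `L` of `C_n` is linear, `L k = k * L 1`, and `L n ≤ n` forces
`L 1 ∈ {0, 1}`: `L` is the zero map or the identity. By (S2) the left translation at the top is
the identity, while those at the `n` other elements are independent choices among these two. -/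

namespace Chain

variable {n : ℕ}

def zero (n : ℕ) : Chain n := ⟨0, n.zero_le⟩

def ofFin (i : Fin n) : Chain n := ⟨i, i.is_lt.le⟩

theorem not_val_top_lt : ¬ (ChainTop n).val < n := lt_irrefl n

theorem eq_top_of_not_val_lt {a : Chain n} (h : ¬ a.val < n) : a = ChainTop n :=
  Subtype.ext (le_antisymm a.prop (not_lt.mp h))

end Chain

open Chain

theorem chainAdditive_id (n : ℕ) : ChainAdditive (id : Chain n → Chain n) :=
  fun _ _ _ h => h.symm

theorem chainAdditive_const_zero (n : ℕ) : ChainAdditive (fun _ : Chain n => zero n) :=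
  fun _ _ _ _ => rfl

namespace ChainAdditive

variable {n : ℕ} {L : Chain n → Chain n}

theorem val_map_zero (h : ChainAdditive L) : (L (zero n)).val = 0 := by
  have := h (zero n) (zero n) (zero n) rfl
  omega

theorem val_apply_eq_mul (hn : 1 ≤ n) (h : ChainAdditive L) :
    ∀ k (hk : k ≤ n), (L ⟨k, hk⟩).val = k * (L ⟨1, hn⟩).val
  | 0, _ => by rw [zero_mul]; exact h.val_map_zero
  | k + 1, hk => by
    rw [h ⟨k, by omega⟩ ⟨1, hn⟩ ⟨k + 1, hk⟩ rfl, val_apply_eq_mul hn h k, add_one_mul]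

theorem eq_id_or_eq_zero (hn : 1 ≤ n) (h : ChainAdditive L) :
    L = id ∨ L = fun _ => zero n := by
  have hL (b : Chain n) : (L b).val = b.val * (L ⟨1, hn⟩).val :=
    h.val_apply_eq_mul hn b.val b.prop
  have hslope : n * (L ⟨1, hn⟩).val ≤ n := hL (ChainTop n) ▸ (L (ChainTop n)).prop
  rcases Nat.le_one_iff_eq_zero_or_eq_one.mp ((mul_le_iff_le_one_right hn).mp hslope)
    with h0 | h1
  · exact Or.inr (funext fun b => Subtype.ext (by rw [hL, h0, mul_zero]; rfl))
  · exact Or.inl (funext fun b => Subtype.ext (by rw [hL, h1, mul_one]; rfl))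

end ChainAdditive

theorem chainAdditive_iff {n : ℕ} (hn : 1 ≤ n) {L : Chain n → Chain n} :
    ChainAdditive L ↔ L = id ∨ L = fun _ => zero n := by
  refine ⟨ChainAdditive.eq_id_or_eq_zero hn, ?_⟩
  rintro (rfl | rfl)
  exacts [chainAdditive_id n, chainAdditive_const_zero n]

theorem card_chainAdditive {n : ℕ} (hn : 1 ≤ n) :
    Nat.card {L : Chain n → Chain n // ChainAdditive L} = 2 := by
  have hne : (id : Chain n → Chain n) ≠ fun _ => zero n := fun h =>
    one_ne_zero (congrArg Subtype.val (congrFun h ⟨1, hn⟩))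
  rw [← Set.ncard_pair hne, ← Nat.card_coe_set_eq]
  congr
  ext L
  exact chainAdditive_iff hn

def chainS1S2EquivFun (n : ℕ) :
    {op : Chain n → Chain n → Chain n // ChainS1 op ∧ ChainS2 op} ≃
      (Fin n → {L : Chain n → Chain n // ChainAdditive L}) where
  toFun op i := ⟨op.1 (ofFin i), op.2.1 _⟩
  invFun f := ⟨fun a => if h : a.val < n then (f ⟨a.val, h⟩).1 else id,
    fun a => by
      by_cases h : a.val < n
      · simpa [h] using (f ⟨a.val, h⟩).2
      · simpa [h] using chainAdditive_id n,
    fun b => by simp [not_val_top_lt]⟩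
  left_inv := by
    rintro ⟨op, -, hS2⟩
    ext a b
    by_cases h : a.val < n
    · simp only [h, dif_pos]
      rfl
    · obtain rfl := eq_top_of_not_val_lt h
      simp [not_val_top_lt, hS2 b]
  right_inv f := by
    funext i
    simp [ofFin]

theorem chain_S1S2_count_general (n : ℕ) :
    Nat.card {op : Chain n → Chain n → Chain n // ChainS1 op ∧ ChainS2 op} = 2 ^ n := by
  rw [Nat.card_congr (chainS1S2EquivFun n), Nat.card_fun, Nat.card_fin]
  rcases Nat.eq_zero_or_pos n with rfl | hn
  · rfl
  · rw [card_chainAdditive hn]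

/-- for `n ≥ 1`, there are exactly `2^n` binary operations on the chain
`C_n` satisfying (S1) and (S2). -/
theorem chain_S1S2_count (n : ℕ) (hn : 1 ≤ n) :
    Nat.card {op : Chain n → Chain n → Chain n // ChainS1 op ∧ ChainS2 op} = 2 ^ n :=
  chain_S1S2_count_general n
end

section
/- Let E ≅ E_u be a finite MV-effect algebra (a finite product of finite chains, coordinatized as the interval [0,u] ⊆ ℤ^r for u with positive entries). Then E admits a total binary operation satisfying (S1)–(S4) if and only if all u_i = 1, i.e., if and only if E is a Boolean algebra. -/
/-- The simplicial interval effect algebra `E_u = [0, u] ⊆ ℤ^r`, with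
`x ⊕ y = x + y` defined whenever `x + y ≤ u` componentwise. -/
def Eu {r : ℕ} (u : Fin r → ℤ) : Type := {x : Fin r → ℤ // 0 ≤ x ∧ x ≤ u}

/-- A map `L : E_u → E_v` is additive: `L (x ⊕ y) = L x ⊕ L y` whenever `x + y ≤ u`,
i.e. whenever `x + y` is again an element `z` of `E_u`. -/
def AdditiveMap {r s : ℕ} (u : Fin r → ℤ) (v : Fin s → ℤ)
    (L : Eu u → Eu v) : Prop :=
  ∀ x y z : Eu u, x.val + y.val = z.val → (L z).val = (L x).val + (L y).val

/-- (S1) for a binary operation on `E_u`: every left translation is additive. -/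
def EuS1 {r : ℕ} (u : Fin r → ℤ) (op : Eu u → Eu u → Eu u) : Prop :=
  ∀ a : Eu u, AdditiveMap u u (op a)

/-- (S3) for a binary operation on `E_u`: `a ∘ b = 0` implies `b ∘ a = 0`. -/
def EuS3 {r : ℕ} (u : Fin r → ℤ) (op : Eu u → Eu u → Eu u) : Prop :=
  ∀ a b : Eu u, (op a b).val = 0 → (op b a).val = 0

/-- (S4) on `E_u` (orthosupplement `b' = u - b`): if `a ∘ b = b ∘ a` then
`a ∘ b' = b' ∘ a` and `a ∘ (b ∘ c) = (a ∘ b) ∘ c`. -/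
def EuS4 {r : ℕ} (u : Fin r → ℤ) (op : Eu u → Eu u → Eu u) : Prop :=
  ∀ a b : Eu u, op a b = op b a →
    (∀ b' : Eu u, b'.val = u - b.val → op a b' = op b' a) ∧
    (∀ c : Eu u, op a (op b c) = op (op a b) c)

/-! Every left translation `x ↦ a ∘ x` is additive, hence linear in the coordinates of `x`:
`a ∘ x = ∑ⱼ xⱼ (a ∘ eⱼ)`. By (S1) and (S3), `0` commutes with every `a`, so (S4) with
`b' = 0' = u` gives `a ∘ u = u ∘ a = a`, and therefore `a ∘ b ≤ a ∘ b + a ∘ b' = a`.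
Since `eᵢ ∘ u = eᵢ ≠ 0`, some `eᵢ ∘ eⱼ ≠ 0`; then `eⱼ ∘ eᵢ ≠ 0` by (S3), and as it lies below the
atom `eⱼ` it equals `eⱼ`. Now `eⱼ ∘ (uᵢ eᵢ) = uᵢ eⱼ ≤ eⱼ` forces `uᵢ = 1`.
Conversely, for `u = (1, …, 1)` the componentwise minimum satisfies (S1)–(S4). -/

namespace Eu

variable {r : ℕ} {u : Fin r → ℤ}

def sub (x y : Eu u) (hyx : y.val ≤ x.val) : Eu u :=
  ⟨x.val - y.val, sub_nonneg.2 hyx, (sub_le_self _ y.2.1).trans x.2.2⟩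

def single (hu : 0 ≤ u) (i : Fin r) (c : ℤ) (hc : 0 ≤ c) (hcu : c ≤ u i) : Eu u :=
  ⟨Pi.single i c, Pi.single_nonneg.2 hc, fun j => by
    rcases eq_or_ne j i with rfl | hji
    · simpa using hcu
    · simpa [hji] using hu j⟩

def atom (hu : ∀ i, 1 ≤ u i) (i : Fin r) : Eu u :=
  single (fun j => zero_le_one.trans (hu j)) i 1 zero_le_one (hu i)

def inf (a b : Eu u) : Eu u :=
  ⟨a.val ⊓ b.val, le_inf a.2.1 b.2.1, inf_le_left.trans a.2.2⟩

@[simp] lemma sub_val (x y : Eu u) (hyx : y.val ≤ x.val) : (sub x y hyx).val = x.val - y.val :=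
  rfl

@[simp] lemma single_val (hu : 0 ≤ u) (i : Fin r) (c : ℤ) (hc : 0 ≤ c) (hcu : c ≤ u i) :
    (single hu i c hc hcu).val = Pi.single i c :=
  rfl

@[simp] lemma atom_val (hu : ∀ i, 1 ≤ u i) (i : Fin r) : (atom hu i).val = Pi.single i 1 :=
  rfl

@[simp] lemma inf_val (a b : Eu u) : (inf a b).val = a.val ⊓ b.val :=
  rfl

lemma inf_comm (a b : Eu u) : inf a b = inf b a :=
  Subtype.ext (_root_.inf_comm _ _)

lemma inf_assoc (a b c : Eu u) : inf a (inf b c) = inf (inf a b) c :=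
  Subtype.ext (_root_.inf_assoc _ _ _).symm

lemma inf_eq_right {t : Eu u} (ht : t.val = u) (x : Eu u) : inf t x = x :=
  Subtype.ext (_root_.inf_eq_right.2 (ht.symm ▸ x.2.2))

end Eu

namespace AdditiveMap

variable {r s : ℕ} {u : Fin r → ℤ} {v : Fin s → ℤ} {L : Eu u → Eu v}

theorem val_eq_zero (hL : AdditiveMap u v L) {x : Eu u} (hx : x.val = 0) : (L x).val = 0 :=
  left_eq_add.1 (hL x x x (by simp [hx]))

theorem val_eq_sum_smul (hu : ∀ i, 1 ≤ u i) (hL : AdditiveMap u v L) (x : Eu u) :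
    (L x).val = ∑ j, x.val j • (L (Eu.atom hu j)).val := by
  induction hn : (∑ j, x.val j).toNat generalizing x with
  | zero =>
    have hx : x.val = 0 := by
      have hsum : 0 ≤ ∑ j, x.val j := Finset.sum_nonneg fun j _ => x.2.1 j
      have h0 := (Finset.sum_eq_zero_iff_of_nonneg (s := Finset.univ) fun j _ => x.2.1 j).1
        (by omega)
      funext j
      simpa using h0 j
    simp [hL.val_eq_zero hx, hx]
  | succ n ih =>
    obtain ⟨j, hj⟩ : ∃ j, 1 ≤ x.val j := by
      by_contra! h
      have : ∑ j, x.val j ≤ 0 := Finset.sum_nonpos fun j _ => Int.lt_add_one_iff.1 (h j)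
      omega
    have hjx : (Eu.atom hu j).val ≤ x.val := fun k => by
      rcases eq_or_ne k j with rfl | hkj
      · simpa using hj
      · simpa [hkj] using x.2.1 k
    set y := Eu.sub x (Eu.atom hu j) hjx
    have hy : (∑ k, y.val k).toNat = n := by
      simp only [y, Eu.sub_val, Eu.atom_val, Pi.sub_apply, Finset.sum_sub_distrib,
        Finset.sum_pi_single', Finset.mem_univ, if_true, Int.pred_toNat]
      omega
    rw [hL (Eu.atom hu j) y x (by simp [y]), ih y hy]
    simp [y, sub_smul, Finset.sum_sub_distrib, Pi.single_apply]

end AdditiveMap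

namespace Eu

variable {r : ℕ} {u : Fin r → ℤ} {op : Eu u → Eu u → Eu u} {t : Eu u}

theorem op_top_eq_self (ht : t.val = u) (hS1 : EuS1 u op) (hS2 : ∀ x, op t x = x)
    (hS3 : EuS3 u op) (hS4 : EuS4 u op) (a : Eu u) : op a t = a := by
  set z := sub t t le_rfl
  have hz : z.val = 0 := sub_self _
  have haz : (op a z).val = 0 := (hS1 a).val_eq_zero hz
  have hcomm : op a z = op z a := Subtype.ext (haz.trans (hS3 a z haz).symm)
  rw [(hS4 a z hcomm).1 t (by rw [hz, sub_zero, ht]), hS2]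

theorem op_val_le_left (ht : t.val = u) (hS1 : EuS1 u op) {a : Eu u} (htop : op a t = a)
    (b : Eu u) : (op a b).val ≤ a.val := by
  have hsplit := hS1 a b (sub t b (by rw [ht]; exact b.2.2)) t (by simp)
  rw [htop] at hsplit
  rw [hsplit]
  exact le_add_of_nonneg_right (op a _).2.1

theorem eq_one_of_S1S4 (hu : ∀ i, 1 ≤ u i) (ht : t.val = u) (hS1 : EuS1 u op)
    (hS2 : ∀ x, op t x = x) (hS3 : EuS3 u op) (hS4 : EuS4 u op) (i : Fin r) : u i = 1 := by
  have hle a b := op_val_le_left ht hS1 (op_top_eq_self ht hS1 hS2 hS3 hS4 a) b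
  obtain ⟨j, hij⟩ : ∃ j, (op (atom hu i) (atom hu j)).val ≠ 0 := by
    by_contra! h
    have := (hS1 (atom hu i)).val_eq_sum_smul hu t
    simp [op_top_eq_self ht hS1 hS2 hS3 hS4, h] at this
  have hji : (op (atom hu j) (atom hu i)).val ≠ 0 := mt (hS3 _ _) hij
  have hji_j : (op (atom hu j) (atom hu i)).val j = 1 := by
    by_contra hne
    refine hji (funext fun k => le_antisymm ?_ ((op _ _).2.1 k))
    have h1 := hle (atom hu j) (atom hu i) k
    rcases eq_or_ne k j with rfl | hkj
    · simp only [atom_val, Pi.single_eq_same] at h1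
      change _ ≤ 0
      omega
    · simpa [hkj] using h1
  set c := single (fun k => zero_le_one.trans (hu k)) i (u i) (zero_le_one.trans (hu i)) le_rfl
  have hc : (op (atom hu j) c).val = u i • (op (atom hu j) (atom hu i)).val := by
    rw [(hS1 (atom hu j)).val_eq_sum_smul hu c]
    simp [c, Pi.single_apply]
  have h1 := hle (atom hu j) c j
  simp only [hc, Pi.smul_apply, hji_j, smul_eq_mul, mul_one, atom_val, Pi.single_eq_same] at h1
  exact le_antisymm h1 (hu i)

theorem euS1_inf (hu : ∀ i, u i = 1) : EuS1 u inf := by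
  intro a x y z hxyz
  funext j
  have hj : x.val j + y.val j = z.val j := congrFun hxyz j
  have ha0 : 0 ≤ a.val j := a.2.1 j
  have ha1 : a.val j ≤ 1 := hu j ▸ a.2.2 j
  have hz : z.val j ≤ 1 := hu j ▸ z.2.2 j
  have hx : 0 ≤ x.val j := x.2.1 j
  have hy : 0 ≤ y.val j := y.2.1 j
  simp only [inf_val, Pi.inf_apply, Pi.add_apply]
  omega

theorem euS3_inf : EuS3 u inf := fun a b h => by rwa [inf_comm]

theorem euS4_inf : EuS4 u inf := fun a b _ => ⟨fun b' _ => inf_comm a b', inf_assoc a b⟩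

end Eu

/-- threshold theorem for finite MV-effect algebras. The simplicial
interval `E_u` admits a total binary operation satisfying (S1)-(S4) iff all `u_i = 1`,
i.e. iff `E_u` is a Boolean algebra. -/
theorem Eu_S1S4_iff_boolean {r : ℕ} (u : Fin r → ℤ) (hu : ∀ i, 1 ≤ u i)
    (t : Eu u) (ht : t.val = u) :
    (∃ op : Eu u → Eu u → Eu u,
        EuS1 u op ∧ (∀ x : Eu u, op t x = x) ∧ EuS3 u op ∧ EuS4 u op) ↔
      ∀ i, u i = 1 := by
  constructor
  · rintro ⟨op, hS1, hS2, hS3, hS4⟩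
    exact Eu.eq_one_of_S1S4 hu ht hS1 hS2 hS3 hS4
  · intro hu1
    exact ⟨Eu.inf, Eu.euS1_inf hu1, Eu.inf_eq_right ht, Eu.euS3_inf, Eu.euS4_inf⟩
end
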